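/- arXiv:2101.02528 — 4 statements merged into one kernel-verified Lean document; each statement's English description precedes it below -/
import Mathlib

section
/- Let R ∈ ℂ with Im(R) ≠ 0. Then there exists s ∈ ℂ with Re(s) > 0 such that Re(−R√(s²+1)) > 0, where √ is the principal branch of the complex square root. In other words, any nonzero imaginary part of the parameter R destroys the uniform damping property of the PML-II layer. -/
/-!
For `w` in the open right half-plane and off the real axis, `s = √(w² - 1)` has `Re s > 0`
(as `w² - 1` is not real) and `√(s² + 1) = √(w²) = w`. So it suffices to find such a `w` with
`Re(-R w) > 0`: for `R = c + i d` with `d ≠ 0`, `w = d² + i d (|c| + 1)` gives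
`Re(-R w) = d² (|c| - c + 1)`.
-/

namespace Complex

lemma re_cpow_one_half_pos {z : ℂ} (hz : z.im ≠ 0) : 0 < (z ^ (1 / 2 : ℂ)).re := by
  have hnorm : -z.re < ‖z‖ := (neg_le_abs z.re).trans_lt (abs_re_lt_norm.2 hz)
  rw [one_div, cpow_inv_two_re]
  exact Real.sqrt_pos.2 (by linarith)

lemma exists_re_pos_sq_add_one_cpow_one_half_eq {w : ℂ} (hre : 0 < w.re) (him : w.im ≠ 0) :
    ∃ s : ℂ, 0 < s.re ∧ (s ^ 2 + 1) ^ (1 / 2 : ℂ) = w := by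
  have him' : (w ^ 2 - 1).im ≠ 0 := by
    have h : (w ^ 2 - 1).im = 2 * w.re * w.im := by
      simp only [sub_im, one_im, sq, mul_im]
      ring
    rw [h]
    exact mul_ne_zero (mul_ne_zero two_ne_zero hre.ne') him
  refine ⟨(w ^ 2 - 1) ^ (1 / 2 : ℂ), re_cpow_one_half_pos him', ?_⟩
  rw [one_div, cpow_ofNat_inv_pow, sub_add_cancel, sq_cpow_two_inv hre]

lemma exists_re_pos_im_ne_zero_re_neg_mul_pos {R : ℂ} (hR : R.im ≠ 0) :
    ∃ w : ℂ, 0 < w.re ∧ w.im ≠ 0 ∧ 0 < (-R * w).re := by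
  refine ⟨⟨R.im ^ 2, R.im * (|R.re| + 1)⟩, by positivity,
    mul_ne_zero hR (by positivity), ?_⟩
  have hc : 0 < |R.re| - R.re + 1 := by linarith [le_abs_self R.re]
  have hre_mul : (-R * ⟨R.im ^ 2, R.im * (|R.re| + 1)⟩).re = R.im ^ 2 * (|R.re| - R.re + 1) := by
    simp only [mul_re, neg_re, neg_im]
    ring
  rw [hre_mul]
  positivity

end Complex

/-- If the parameter `R` has nonzero imaginary part, then there exists `s` with `Re(s) > 0`
such that `Re(−R√(s²+1)) > 0`: the PML-II layer is no longer uniformly damping. -/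
theorem complex_R_destroys_damping (R : ℂ) (hR : R.im ≠ 0) :
    ∃ s : ℂ, 0 < s.re ∧ 0 < (-R * (s ^ 2 + 1) ^ (1/2 : ℂ)).re := by
  obtain ⟨w, hre, him, hdamp⟩ := Complex.exists_re_pos_im_ne_zero_re_neg_mul_pos hR
  obtain ⟨s, hs, hsqrt⟩ := Complex.exists_re_pos_sq_add_one_cpow_one_half_eq hre him
  exact ⟨s, hs, hsqrt ▸ hdamp⟩
end

section
/- Let α ≥ 0 be a real number. For every s ∈ ℂ with Re(s) > 0, one has Re(g(s)) < 0, where g(s) = −√(s²+1)/(s+α) and √ is the principal branch of the complex square root. -/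
/-- For `α ≥ 0` and `Re(s) > 0`, the PML-I modulation factor
`g(s) = −√(s²+1)/(s+α)` has negative real part. -/
theorem pml1_damping_factor_neg (α : ℝ) (hα : 0 ≤ α) (s : ℂ) (hs : 0 < s.re) :
    (-((s ^ 2 + 1) ^ (1/2 : ℂ)) / (s + (α : ℂ))).re < 0 := by
  set z : ℂ := s ^ 2 + 1 with hzdef
  have hzre : z.re = s.re ^ 2 - s.im ^ 2 + 1 := by
    simp [hzdef, pow_two, Complex.mul_re]; try ring
  have hzim : z.im = 2 * s.re * s.im := by
    simp [hzdef, pow_two, Complex.mul_im]; ring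
  have hzkey : z.im = 0 → 0 < z.re := by
    intro h
    have him : s.im = 0 := by
      rw [hzim] at h; nlinarith
    rw [hzre, him]; nlinarith
  have hz0 : z ≠ 0 := by
    intro h
    have h1 : z.im = 0 := by rw [h]; simp
    have := hzkey h1
    rw [h] at this; simp at this
  set w : ℂ := z ^ (1/2 : ℂ) with hwdef
  have hw2 : w ^ 2 = z := by
    rw [hwdef]
    have h12 : (1/2 : ℂ) = ((2:ℕ) : ℂ)⁻¹ := by norm_num
    rw [h12, Complex.cpow_nat_inv_pow _ (by norm_num : (2:ℕ) ≠ 0)]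
  have hargpi : z.arg ≠ Real.pi := by
    intro hpi
    rw [Complex.arg_eq_pi_iff] at hpi
    obtain ⟨h1, h2⟩ := hpi
    have := hzkey h2
    linarith
  have harglt : z.arg < Real.pi := lt_of_le_of_ne (Complex.arg_le_pi z) hargpi
  have harggt : -Real.pi < z.arg := Complex.neg_pi_lt_arg z
  have hwre : 0 < w.re := by
    rw [hwdef, Complex.cpow_def_of_ne_zero hz0, Complex.exp_re]
    apply mul_pos (Real.exp_pos _)
    have him : (Complex.log z * (1/2 : ℂ)).im = z.arg / 2 := by
      simp [Complex.mul_im, Complex.log_im]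
      ring
    rw [him]
    apply Real.cos_pos_of_mem_Ioo
    constructor <;> [linarith; linarith]
  have himw : 2 * w.re * w.im = z.im := by
    have := congrArg Complex.im hw2
    rw [pow_two, Complex.mul_im] at this
    linarith
  -- denominator
  have htre : (s + (α : ℂ)).re = s.re + α := by simp
  have htim : (s + (α : ℂ)).im = s.im := by simp
  have htpos : 0 < (s + (α : ℂ)).re := by rw [htre]; linarith
  have hN : 0 < Complex.normSq (s + (α : ℂ)) := by
    apply Complex.normSq_pos.mpr
    intro h
    rw [h] at htpos; simp at htpos
  rw [Complex.div_re, Complex.neg_re, Complex.neg_im, htre, htim]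
  have hnum : 0 < w.re * (s.re + α) + w.im * s.im := by
    rw [hzim] at himw
    have h3 : w.re * w.im * s.im = s.re * s.im ^ 2 := by
      linear_combination (s.im / 2) * himw
    have hk : 0 < w.re * (w.re * (s.re + α) + w.im * s.im) := by
      nlinarith [mul_pos (mul_pos hwre hwre) (show (0:ℝ) < s.re + α by linarith),
        mul_nonneg hs.le (sq_nonneg s.im)]
    nlinarith [hk, hwre]
  have h1 : -w.re * (s.re + α) / Complex.normSq (s + (α:ℂ)) +
      -w.im * s.im / Complex.normSq (s + (α:ℂ))
      = -((w.re * (s.re + α) + w.im * s.im) / Complex.normSq (s + (α:ℂ))) := by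
    ring
  rw [h1]
  simp only [neg_neg, neg_lt, neg_zero]
  exact div_pos hnum hN
end

section
/- Let α ≥ 0 be a real number and let g(s) = −√(s²+1)/(s+α) with √ the principal branch of the complex square root. Then for every δ > 0 there exists s ∈ ℂ with Re(s) > 0 such that −δ < Re(g(s)) < 0. In particular, there is no uniform lower bound on the damping rate |Re(g(s))| over the right half-plane Re(s) > 0. -/
/-!
As `s → i` the radicand `s² + 1` tends to `0`, and the principal square root is continuous at `0`,
so `g(s) → 0`; approaching `i` along `s = ε + i`, `ε → 0⁺`, stays in the right half-plane.
On the other hand, for `Re s > 0` and `Im s ≥ 0` both `√(s² + 1)` and `s + α` lie in the first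
quadrant with positive real part, so their quotient has positive real part and `Re g(s) < 0`.
-/

open Complex Filter Topology

namespace Complex

theorem re_cpow_inv_two_pos {z : ℂ} (hz : z ∈ slitPlane) : 0 < (z ^ (2⁻¹ : ℂ)).re := by
  rw [cpow_inv_two_re, Real.sqrt_pos]
  rcases mem_slitPlane_iff.1 hz with hre | him
  · linarith [norm_nonneg z]
  · linarith [neg_abs_le z.re, abs_re_lt_norm.2 him]

theorem re_div_pos {w v : ℂ} (hw : 0 < w.re) (hw' : 0 ≤ w.im) (hv : 0 < v.re) (hv' : 0 ≤ v.im) :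
    0 < (w / v).re := by
  have hv₀ : 0 < normSq v := normSq_pos.2 fun h => hv.ne' (by simp [h])
  rw [div_re]
  exact add_pos_of_pos_of_nonneg (by positivity) (by positivity)

end Complex

noncomputable def pmlDampingFactor (α : ℝ) (s : ℂ) : ℂ :=
  -((s ^ 2 + 1) ^ (1/2 : ℂ)) / (s + (α : ℂ))

theorem re_pmlDampingFactor_neg {α : ℝ} (hα : 0 ≤ α) {s : ℂ} (hs : 0 < s.re) (hs' : 0 ≤ s.im) :
    (pmlDampingFactor α s).re < 0 := by
  have hz_im : 0 ≤ (s ^ 2 + 1).im := by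
    simp only [add_im, one_im, add_zero, sq, mul_im]
    positivity
  have hz_slit : s ^ 2 + 1 ∈ slitPlane := by
    rcases hs'.eq_or_lt with him | him
    · left
      simp only [sq, add_re, mul_re, ← him, mul_zero, sub_zero, one_re]
      positivity
    · right
      simp only [sq, add_im, mul_im, one_im, add_zero, ne_eq]
      positivity
  rw [pmlDampingFactor, neg_div, neg_re, neg_lt_zero, one_div]
  exact re_div_pos (re_cpow_inv_two_pos hz_slit) (cpow_inv_two_im_eq_sqrt hz_im ▸ Real.sqrt_nonneg _)
    (by rw [add_re, ofReal_re]; positivity) (by simpa using hs')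

theorem tendsto_pmlDampingFactor_I (α : ℝ) : Tendsto (pmlDampingFactor α) (𝓝 I) (𝓝 0) := by
  have hsqrt : ContinuousAt (fun s : ℂ => (s ^ 2 + 1) ^ (1/2 : ℂ)) I :=
    (continuousAt_cpow_const_of_re_pos (by simp) (by norm_num)).comp (by fun_prop)
  have hden : I + (α : ℂ) ≠ 0 := fun h => by simpa using congrArg im h
  have hcont : ContinuousAt (pmlDampingFactor α) I :=
    hsqrt.neg.div (continuousAt_id.add continuousAt_const) hden
  simpa [pmlDampingFactor] using hcont.tendsto

/-- For `α ≥ 0`, the real part of `g(s) = −√(s²+1)/(s+α)` gets arbitrarily close to `0`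
from below over the right half-plane: no uniform lower bound on the damping rate. -/
theorem pml1_no_uniform_damping (α : ℝ) (hα : 0 ≤ α) :
    ∀ δ : ℝ, 0 < δ → ∃ s : ℂ, 0 < s.re ∧
      -δ < (-((s ^ 2 + 1) ^ (1/2 : ℂ)) / (s + (α : ℂ))).re ∧
      (-((s ^ 2 + 1) ^ (1/2 : ℂ)) / (s + (α : ℂ))).re < 0 := by
  intro δ hδ
  have hpath : Tendsto (fun ε : ℝ => (ε : ℂ) + I) (𝓝[>] 0) (𝓝 I) :=
    ((by fun_prop : Continuous fun ε : ℝ => (ε : ℂ) + I).tendsto' 0 I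
      (by simp)).mono_left nhdsWithin_le_nhds
  have hre : Tendsto (fun ε : ℝ => (pmlDampingFactor α (ε + I)).re) (𝓝[>] 0) (𝓝 0) := by
    simpa [Function.comp_def] using
      (continuous_re.tendsto 0).comp ((tendsto_pmlDampingFactor_I α).comp hpath)
  obtain ⟨ε, hδε, hε : 0 < ε⟩ :=
    ((hre.eventually (lt_mem_nhds (neg_lt_zero.2 hδ))).and self_mem_nhdsWithin).exists
  exact ⟨ε + I, by simpa using hε, hδε, re_pmlDampingFactor_neg hα (by simpa using hε) (by simp)⟩
end

section
/- Let δ > 0 and let k ≥ 0 be an integer. Define β_k : [−δ, 0) → ℝ by β_k(z) = −1/z − Σ_{j=0}^{k} (1/j!) β_{−1}^{(j)}(−δ)(z+δ)^j with β_{−1}(z) = −1/z. Then β_k(z) ≥ 0 for all z ∈ [−δ, 0), and β_k is nondecreasing on [−δ, 0). In particular the regularized Bermúdez absorption function σ_{B_k} is nonnegative. -/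
/-!
The Taylor coefficients of `β₋₁ = -1/z` at `-δ` are `β₋₁⁽ʲ⁾(-δ)/j! = δ^{-(j+1)}`, so the Taylor
polynomial in `β_k` is a geometric sum in `r = (z + δ)/δ`, and summing it gives the closed form
`β_k(z) = r^{k+1} / (-z)`. On `[-δ, 0)` both factors `r^{k+1}` and `1/(-z)` are nonnegative and
nondecreasing, hence so is their product.
-/

/-- The Bermúdez profile `β₋₁(z) = −1/z`. -/
noncomputable def betam1 : ℝ → ℝ := fun z => -1 / z

/-- The regularized Bermúdez profile
`β_k(z) = β₋₁(z) − Σ_{j=0}^{k} (1/j!) β₋₁⁽ʲ⁾(−δ) (z+δ)^j`. -/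
noncomputable def betak (δ : ℝ) (k : ℕ) : ℝ → ℝ := fun z =>
  -1 / z - ∑ j ∈ Finset.range (k + 1),
    (1 / (Nat.factorial j : ℝ)) * iteratedDeriv j betam1 (-δ) * (z + δ) ^ j

open Finset Set Nat

-- Also true at `x = 0`, where both sides are junk zeros.
lemma iteratedDeriv_betam1 (j : ℕ) (x : ℝ) :
    iteratedDeriv j betam1 x = j ! / (-x) ^ (j + 1) := by
  have hβ : betam1 = fun z => -z⁻¹ := funext fun z => by simp [betam1, neg_div]
  rw [hβ, iteratedDeriv_fun_neg, iteratedDeriv_eq_iterate, iter_deriv_inv,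
    show (-1 - j : ℤ) = -((j + 1 : ℕ) : ℤ) by push_cast; ring, zpow_neg, zpow_natCast, neg_pow x,
    div_eq_mul_inv, mul_inv, ← inv_pow, ← inv_pow, inv_neg, inv_one]
  ring

lemma betam1_taylor_term (δ z : ℝ) (j : ℕ) :
    1 / (j ! : ℝ) * iteratedDeriv j betam1 (-δ) * (z + δ) ^ j = ((z + δ) / δ) ^ j / δ := by
  have hj : (j ! : ℝ) ≠ 0 := by positivity
  rw [iteratedDeriv_betam1, neg_neg, one_div, ← mul_div_assoc, inv_mul_cancel₀ hj, div_pow,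
    pow_succ]
  ring

lemma betak_eq_of_ne_zero {δ z : ℝ} (hδ : δ ≠ 0) (hz : z ≠ 0) (k : ℕ) :
    betak δ k z = ((z + δ) / δ) ^ (k + 1) * (-z)⁻¹ := by
  simp only [betak, betam1_taylor_term, ← sum_div]
  have hgeom := geom_sum_mul ((z + δ) / δ) (k + 1)
  rw [show (z + δ) / δ - 1 = z / δ by field_simp; ring] at hgeom
  generalize (z + δ) / δ = r at hgeom ⊢
  generalize ∑ j ∈ range (k + 1), r ^ j = S at hgeom ⊢
  field_simp at hgeom ⊢
  linear_combination -hgeom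

lemma monotoneOn_inv_neg : MonotoneOn (fun z : ℝ => (-z)⁻¹) (Iio 0) :=
  fun _ _ _ hb hab => inv_anti₀ (neg_pos.mpr hb) (neg_le_neg hab)

/-- The regularized Bermúdez profile `β_k` is nonnegative and nondecreasing on `[−δ, 0)`. -/
theorem betak_nonneg_monotone (δ : ℝ) (hδ : 0 < δ) (k : ℕ) :
    (∀ z ∈ Set.Ico (-δ) (0 : ℝ), 0 ≤ betak δ k z) ∧
      MonotoneOn (betak δ k) (Set.Ico (-δ) (0 : ℝ)) := by
  set r : ℝ → ℝ := fun z => ((z + δ) / δ) ^ (k + 1)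
  set s : ℝ → ℝ := fun z => (-z)⁻¹
  have hclosed : EqOn (r * s) (betak δ k) (Ico (-δ) 0) := fun z hz =>
    (betak_eq_of_ne_zero hδ.ne' hz.2.ne k).symm
  have hr_nonneg : ∀ z ∈ Ico (-δ) 0, 0 ≤ r z := fun z hz =>
    pow_nonneg (div_nonneg (neg_le_iff_add_nonneg.mp hz.1) hδ.le) _
  have hs_nonneg : ∀ z ∈ Ico (-δ) 0, 0 ≤ s z := fun z hz =>
    inv_nonneg.mpr (neg_nonneg.mpr hz.2.le)
  have hr_mono : MonotoneOn r (Ico (-δ) 0) := fun a ha _ _ hab =>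
    pow_le_pow_left₀ (div_nonneg (neg_le_iff_add_nonneg.mp ha.1) hδ.le)
      (div_le_div_of_nonneg_right (by linarith) hδ.le) _
  have hs_mono : MonotoneOn s (Ico (-δ) 0) := monotoneOn_inv_neg.mono fun _ hz => hz.2
  refine ⟨fun z hz => ?_, (hr_mono.mul hs_mono hr_nonneg hs_nonneg).congr hclosed⟩
  rw [← hclosed hz]
  exact mul_nonneg (hr_nonneg z hz) (hs_nonneg z hz)
end
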